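/- arXiv:2007.03217 — 2 statements merged into one kernel-verified Lean document; each statement's English description precedes it below -/
import Mathlib

section
/- Let D_{2n} = ⟨r, s : r^n = s^2 = e, rs = sr^{-1}⟩ be the dihedral group of order 2n with n ≥ 3. Then the vertex connectivity of the enhanced power graph of D_{2n} is 1, and the number of connected components of the enhanced power graph with identity removed equals n + 1. -/
/-- The enhanced power graph of a group `G`: vertices are elements of `G`,
with distinct `u`, `v` adjacent iff both are powers of a common element. -/
def enhancedPowerGraph (G : Type*) [Group G] : SimpleGraph G where
  Adj u v := u ≠ v ∧ ∃ w : G, u ∈ Subgroup.zpowers w ∧ v ∈ Subgroup.zpowers w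
  symm := by
    refine ⟨?_⟩
    rintro u v ⟨h, w, hu, hv⟩
    exact ⟨h.symm, w, hv, hu⟩
  loopless := by
    refine ⟨?_⟩
    rintro u ⟨h, -⟩
    exact h rfl

/-- A dominating vertex: adjacent to every other vertex. -/
def IsDominating {V : Type*} (Γ : SimpleGraph V) (v : V) : Prop :=
  ∀ u, u ≠ v → Γ.Adj v u

/-- The vertex connectivity: the least size of a set of vertices whose removal
leaves a graph that is not connected. -/
noncomputable def vertexConnectivity {V : Type*} (Γ : SimpleGraph V) : ℕ :=
  sInf {n | ∃ s : Set V, s.ncard = n ∧ ¬ (Γ.induce sᶜ).Connected}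

/-!
The identity is a universal vertex of any enhanced power graph, so the graph is connected.
In the dihedral group a reflection `sr i` has order two, and the only cyclic subgroup containing
it is `{1, sr i}`; hence its only neighbour is `1`. All rotations lie in the cyclic group
`⟨r 1⟩`, so they form a clique. Removing `1` therefore leaves one component of nonidentity
rotations and `n` isolated reflections: `n + 1` components, so the single vertex `1` is a
separating set.
-/

open DihedralGroup Subgroup SimpleGraph

lemma mem_zpowers_iff_of_mul_self_eq_one {G : Type*} [Group G] {x g : G} (hx : x * x = 1) :
    g ∈ zpowers x ↔ g = 1 ∨ g = x := by
  refine ⟨fun hg => ?_, ?_⟩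
  · obtain ⟨k, rfl⟩ := mem_zpowers_iff.mp hg
    have hsq : x ^ (2 : ℤ) = 1 := by rw [zpow_two, hx]
    rw [zpow_eq_zpow_emod k hsq]
    rcases Int.emod_two_eq_zero_or_one k with h | h <;> simp [h]
  · rintro (rfl | rfl)
    exacts [one_mem _, mem_zpowers _]

lemma isUniversal_one_enhancedPowerGraph (G : Type*) [Group G] :
    (enhancedPowerGraph G).IsUniversal 1 :=
  fun g hg => ⟨hg, g, one_mem _, mem_zpowers g⟩

-- `Set.ncard` is `0` on infinite sets, so finiteness is what rules out removing zero vertices.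
lemma vertexConnectivity_eq_one {V : Type*} [Finite V] {Γ : SimpleGraph V} (hΓ : Γ.Connected)
    {v : V} (hv : ¬ (Γ.induce {v}ᶜ).Connected) : vertexConnectivity Γ = 1 := by
  refine le_antisymm (Nat.sInf_le ⟨{v}, Set.ncard_singleton v, hv⟩) ?_
  refine Nat.one_le_iff_ne_zero.mpr fun h0 => ?_
  rcases Nat.sInf_eq_zero.mp h0 with ⟨s, hs, hdisc⟩ | hempty
  · rw [Set.ncard_eq_zero] at hs
    subst hs
    rw [Set.compl_empty] at hdisc
    exact hdisc ((induceUnivIso Γ).connected_iff.mpr hΓ)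
  · exact Set.eq_empty_iff_forall_notMem.mp hempty 1 ⟨{v}, Set.ncard_singleton v, hv⟩

lemma SimpleGraph.Reachable.eq_of_forall_adj {V β : Type*} {G : SimpleGraph V} {f : V → β}
    (hf : ∀ ⦃u v⦄, G.Adj u v → f u = f v) {u v : V} (h : G.Reachable u v) : f u = f v := by
  obtain ⟨p⟩ := h
  induction p with
  | nil => rfl
  | cons hadj _ ih => exact (hf hadj).trans ih

namespace DihedralGroup

variable {n : ℕ}

lemma sr_ne_one (i : ZMod n) : sr i ≠ 1 := nofun

lemma mem_zpowers_sr_iff {i : ZMod n} {g : DihedralGroup n} :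
    g ∈ zpowers (sr i) ↔ g = 1 ∨ g = sr i :=
  mem_zpowers_iff_of_mul_self_eq_one (sr_mul_self i)

lemma sr_mem_zpowers_iff {i : ZMod n} {w : DihedralGroup n} : sr i ∈ zpowers w ↔ w = sr i := by
  refine ⟨fun h => ?_, fun h => h ▸ mem_zpowers _⟩
  cases w with
  | r j =>
    obtain ⟨k, hk⟩ := mem_zpowers_iff.mp h
    rw [r_zpow] at hk
    cases hk
  | sr j => exact ((mem_zpowers_sr_iff.mp h).resolve_left (sr_ne_one i)).symm

lemma r_mem_zpowers_r_one (i : ZMod n) : r i ∈ zpowers (r 1 : DihedralGroup n) :=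
  mem_zpowers_iff.mpr ⟨ZMod.cast i, by rw [r_one_zpow, ZMod.intCast_zmod_cast]⟩

lemma enhancedPowerGraph_adj_sr_iff {i : ZMod n} {g : DihedralGroup n} :
    (enhancedPowerGraph (DihedralGroup n)).Adj (sr i) g ↔ g = 1 := by
  constructor
  · rintro ⟨hne, w, hsr, hg⟩
    rw [sr_mem_zpowers_iff] at hsr
    subst hsr
    exact (mem_zpowers_sr_iff.mp hg).resolve_right (Ne.symm hne)
  · rintro rfl
    exact (isUniversal_one_enhancedPowerGraph _ (sr_ne_one i).symm).symm

lemma enhancedPowerGraph_adj_r_r {i j : ZMod n} (h : i ≠ j) :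
    (enhancedPowerGraph (DihedralGroup n)).Adj (r i) (r j) :=
  ⟨fun hij => h (r.inj hij), r 1, r_mem_zpowers_r_one i, r_mem_zpowers_r_one j⟩

def reflectionIndex : DihedralGroup n → Option (ZMod n)
  | r _ => none
  | sr i => some i

lemma reflectionIndex_eq_of_adj {u v : DihedralGroup n} (hu : u ≠ 1) (hv : v ≠ 1)
    (h : (enhancedPowerGraph (DihedralGroup n)).Adj u v) :
    reflectionIndex u = reflectionIndex v := by
  cases u with
  | sr i => exact absurd (enhancedPowerGraph_adj_sr_iff.mp h) hv
  | r i =>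
    cases v with
    | r j => rfl
    | sr j => exact absurd (enhancedPowerGraph_adj_sr_iff.mp h.symm) hu

lemma card_connectedComponent_enhancedPowerGraph_induce_ne_one (hn : 2 ≤ n) :
    Nat.card ((enhancedPowerGraph (DihedralGroup n)).induce
      {g | g ≠ 1}).ConnectedComponent = n + 1 := by
  have : NeZero n := ⟨by omega⟩
  have : Fact (1 < n) := ⟨by omega⟩
  set Γ := (enhancedPowerGraph (DihedralGroup n)).induce {g | g ≠ 1}
  let F : Γ.ConnectedComponent → Option (ZMod n) :=
    ConnectedComponent.lift (fun g => reflectionIndex g.1) fun _ _ p _ =>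
      p.reachable.eq_of_forall_adj (G := Γ) fun a b hab =>
        reflectionIndex_eq_of_adj a.2 b.2 (induce_adj.mp hab)
  have hF : Function.Bijective F := by
    constructor
    · refine ConnectedComponent.ind₂ fun ⟨u, hu⟩ ⟨v, hv⟩ huv => ?_
      change reflectionIndex u = reflectionIndex v at huv
      cases u <;> cases v <;> simp only [reflectionIndex, reduceCtorEq, Option.some.injEq] at huv
      case r.r i j =>
        by_cases hij : i = j
        · subst hij; rfl
        · exact ConnectedComponent.sound
            (induce_adj.mpr (enhancedPowerGraph_adj_r_r hij)).reachable
      case sr.sr i j => subst huv; rfl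
    · rintro (_ | i)
      · exact ⟨Γ.connectedComponentMk ⟨r 1, fun h => one_ne_zero (r.inj h)⟩, rfl⟩
      · exact ⟨Γ.connectedComponentMk ⟨sr i, sr_ne_one i⟩, rfl⟩
  rw [Nat.card_eq_of_bijective F hF, Nat.card_eq_fintype_card, Fintype.card_option, ZMod.card]

end DihedralGroup

theorem stmt_15 (n : ℕ) (hn : 3 ≤ n) :
    vertexConnectivity (enhancedPowerGraph (DihedralGroup n)) = 1 ∧
      Nat.card ((enhancedPowerGraph (DihedralGroup n)).induce
        {g | g ≠ 1}).ConnectedComponent = n + 1 := by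
  have : NeZero n := ⟨by omega⟩
  have hcard := card_connectedComponent_enhancedPowerGraph_induce_ne_one (n := n) (by omega)
  have hdisconnected :
      ¬ ((enhancedPowerGraph (DihedralGroup n)).induce {1}ᶜ).Connected := fun hconn => by
    have : Subsingleton ((enhancedPowerGraph (DihedralGroup n)).induce
        {g | g ≠ 1}).ConnectedComponent := hconn.preconnected.subsingleton_connectedComponent
    have := Finite.card_le_one_iff_subsingleton.mpr this
    omega
  exact ⟨vertexConnectivity_eq_one
    (Connected.of_isUniversal (isUniversal_one_enhancedPowerGraph _)) hdisconnected, hcard⟩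
end

section
/- Let Q_{2^n} be the generalized quaternion group of order 2^n, n ≥ 3. Then the vertex connectivity of the enhanced power graph of Q_{2^n} equals 2, and the number of connected components of the proper enhanced power graph (after deleting the identity and the unique element of order 2) equals 2^{n-2} + 1. -/
namespace SimpleGraph

variable {V : Type*} {Γ : SimpleGraph V}

theorem _root_.IsDominating.induce_connected {d : V} (hd : IsDominating Γ d) {s : Set V}
    (hds : d ∈ s) : (Γ.induce s).Connected := by
  refine (connected_iff_exists_forall_reachable _).2 ⟨⟨d, hds⟩, fun u => ?_⟩
  by_cases hu : (u : V) = d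
  · exact (Subtype.ext hu : u = ⟨d, hds⟩) ▸ Reachable.refl _
  · exact Adj.reachable (hd u hu)

theorem vertexConnectivity_eq_two [Finite V] {d₁ d₂ : V} (hne : d₁ ≠ d₂)
    (hd₁ : IsDominating Γ d₁) (hd₂ : IsDominating Γ d₂)
    (hdis : ¬ (Γ.induce {d₁, d₂}ᶜ).Connected) : vertexConnectivity Γ = 2 := by
  have hmem : 2 ∈ {n | ∃ s : Set V, s.ncard = n ∧ ¬ (Γ.induce sᶜ).Connected} :=
    ⟨_, Set.ncard_pair hne, hdis⟩
  unfold vertexConnectivity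
  refine le_antisymm (Nat.sInf_le hmem) (le_csInf ⟨2, hmem⟩ ?_)
  rintro _ ⟨s, rfl, hs⟩
  by_contra! hlt
  have hpair : ¬ {d₁, d₂} ⊆ s := fun h => by
    have := Set.ncard_le_ncard h s.toFinite
    rw [Set.ncard_pair hne] at this
    omega
  rw [Set.pair_subset_iff, not_and_or] at hpair
  rcases hpair with h | h
  · exact hs (hd₁.induce_connected h)
  · exact hs (hd₂.induce_connected h)

theorem Reachable.eq_of_forall_adj_s16 {β : Type*} {f : V → β}
    (hf : ∀ ⦃u v⦄, Γ.Adj u v → f u = f v) {u v : V} (h : Γ.Reachable u v) : f u = f v := by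
  obtain ⟨p⟩ := h
  induction p with
  | nil => rfl
  | cons ha _ ih => exact (hf ha).trans ih

theorem card_connectedComponent_eq {β : Type*} (f : V → β) (hf : Function.Surjective f)
    (hadj : ∀ ⦃u v⦄, Γ.Adj u v → f u = f v)
    (hreach : ∀ ⦃u v⦄, f u = f v → Γ.Reachable u v) :
    Nat.card Γ.ConnectedComponent = Nat.card β := by
  let φ : Γ.ConnectedComponent → β :=
    ConnectedComponent.lift f fun _ _ p _ => Reachable.eq_of_forall_adj_s16 hadj ⟨p⟩
  refine Nat.card_congr (Equiv.ofBijective φ ⟨fun c c' h => ?_, fun b => ?_⟩)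
  · induction c using ConnectedComponent.ind
    induction c' using ConnectedComponent.ind
    exact ConnectedComponent.sound (hreach h)
  · obtain ⟨v, rfl⟩ := hf b
    exact ⟨Γ.connectedComponentMk v, rfl⟩

end SimpleGraph

section EnhancedPowerGraph

open Subgroup

variable {G : Type*} [Group G]

theorem isDominating_enhancedPowerGraph {z : G} (hz : ∀ u : G, u ≠ 1 → z ∈ zpowers u) :
    IsDominating (enhancedPowerGraph G) z := by
  intro u hu
  refine ⟨hu.symm, ?_⟩
  by_cases h1 : u = 1
  · exact ⟨z, mem_zpowers z, h1 ▸ one_mem _⟩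
  · exact ⟨u, hz u h1, mem_zpowers u⟩

theorem isDominating_enhancedPowerGraph_one : IsDominating (enhancedPowerGraph G) 1 :=
  isDominating_enhancedPowerGraph fun _ _ => one_mem _

theorem IsPGroup.mem_zpowers_of_orderOf_eq_two [Finite G] (hG : IsPGroup 2 G) {z : G}
    (hz : ∀ g : G, orderOf g = 2 → g = z) {u : G} (hu : u ≠ 1) : z ∈ zpowers u := by
  obtain ⟨k, hk⟩ := (IsPGroup.iff_orderOf.1 hG) u
  have hk0 : k ≠ 0 := by
    rintro rfl
    exact hu (orderOf_eq_one_iff.1 hk)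
  have h2 : 2 ∣ orderOf u := hk ▸ dvd_pow_self 2 hk0
  rw [← hz _ (orderOf_pow_orderOf_div (orderOf_pos u).ne' h2)]
  exact pow_mem (mem_zpowers u) _

theorem enhancedPowerGraph_induce_reachable {s : Set G} {u v : s} {w : G}
    (hu : (u : G) ∈ zpowers w) (hv : (v : G) ∈ zpowers w) :
    ((enhancedPowerGraph G).induce s).Reachable u v := by
  by_cases h : u = v
  · exact h ▸ .refl _
  · exact SimpleGraph.Adj.reachable ⟨fun h' => h (Subtype.ext h'), w, hu, hv⟩

end EnhancedPowerGraph

namespace ZMod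

variable {n : ℕ} [NeZero n]

theorem dvd_val_iff_eq_zero_or_eq (x : ZMod (2 * n)) : n ∣ x.val ↔ x = 0 ∨ x = n := by
  have hn := NeZero.pos n
  have hlt := x.val_lt
  have hval : (n : ZMod (2 * n)).val = n := val_natCast_of_lt (by omega)
  rw [← val_eq_zero, ← (val_injective _).eq_iff, hval]
  constructor
  · rintro ⟨c, hc⟩
    have : c < 2 := by nlinarith
    interval_cases c <;> omega
  · rintro (h | h) <;> simp [h]

theorem natCast_ne_zero_of_two_mul : (n : ZMod (2 * n)) ≠ 0 := by
  rw [Ne, natCast_eq_zero_iff]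
  intro h
  have hn := NeZero.pos n
  have := Nat.le_of_dvd hn h
  omega

theorem add_self_eq_zero_iff_of_two_mul (x : ZMod (2 * n)) : x + x = 0 ↔ x = 0 ∨ x = n := by
  have hx : x + x = ((2 * x.val : ℕ) : ZMod (2 * n)) := by
    push_cast
    rw [natCast_zmod_val]
    ring
  rw [hx, natCast_eq_zero_iff, Nat.mul_dvd_mul_iff_left two_pos, dvd_val_iff_eq_zero_or_eq]

theorem castHom_two_mul_eq_zero_iff (x : ZMod (2 * n)) :
    castHom (dvd_mul_left n 2) (ZMod n) x = 0 ↔ x = 0 ∨ x = n := by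
  rw [castHom_apply, cast_eq_val, natCast_eq_zero_iff, dvd_val_iff_eq_zero_or_eq]

end ZMod

namespace QuaternionGroup

open Subgroup

variable {n : ℕ}

theorem a_pow (i : ZMod (2 * n)) (k : ℕ) : a i ^ k = a ((k : ZMod (2 * n)) * i) := by
  induction k with
  | zero => simp
  | succ k ih =>
    rw [pow_succ, ih, a_mul_a]
    push_cast
    ring_nf

theorem xa_pow_three (i : ZMod (2 * n)) : xa i ^ 3 = xa (i + (n : ZMod (2 * n))) := by
  rw [pow_succ', xa_sq, xa_mul_a]

theorem a_mem_zpowers_a_one [NeZero n] (i : ZMod (2 * n)) : a i ∈ zpowers (a 1) :=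
  ⟨(i.val : ℤ), by simp only [zpow_natCast, a_one_pow, ZMod.natCast_zmod_val]⟩

theorem a_n_ne_one [NeZero n] : (a n : QuaternionGroup n) ≠ 1 := by
  rw [one_def, Ne, a.injEq]
  exact ZMod.natCast_ne_zero_of_two_mul

protected theorem orderOf_eq_two_iff [NeZero n] (g : QuaternionGroup n) :
    orderOf g = 2 ↔ g = a n := by
  cases g with
  | xa i => simp
  | a i =>
    rw [orderOf_eq_prime_iff, sq, a_mul_a, one_def, Ne, a.injEq, a.injEq, a.injEq,
      ZMod.add_self_eq_zero_iff_of_two_mul]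
    constructor
    · rintro ⟨h | h, h0⟩
      exacts [absurd h h0, h]
    · rintro rfl
      exact ⟨Or.inr rfl, ZMod.natCast_ne_zero_of_two_mul⟩

theorem isPGroup_two (k : ℕ) : IsPGroup 2 (QuaternionGroup (2 ^ k)) :=
  IsPGroup.of_card (n := k + 2) <| by
    rw [Nat.card_eq_fintype_card, QuaternionGroup.card]
    ring

theorem setOf_ne_one_and_orderOf_ne_two [NeZero n] :
    {g : QuaternionGroup n | g ≠ 1 ∧ orderOf g ≠ 2} = {1, a n}ᶜ := by
  ext g
  simp [QuaternionGroup.orderOf_eq_two_iff, not_or]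

theorem isDominating_a_two_pow (k : ℕ) :
    IsDominating (enhancedPowerGraph (QuaternionGroup (2 ^ k))) (a (2 ^ k : ℕ)) :=
  isDominating_enhancedPowerGraph fun _ hu => (isPGroup_two k).mem_zpowers_of_orderOf_eq_two
    (fun g => (QuaternionGroup.orderOf_eq_two_iff g).1) hu

/-- Labels the maximal cyclic subgroups: `none` for `⟨a 1⟩`, and `some (i mod n)` for
`⟨xa i⟩ = {1, a n, xa i, xa (i + n)}`. -/
def maxCyclicLabel : QuaternionGroup n → Option (ZMod n)
  | a _ => none
  | xa i => some (ZMod.castHom (dvd_mul_left n 2) (ZMod n) i)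

theorem maxCyclicLabel_eq_of_mem_zpowers [NeZero n] {u w : QuaternionGroup n}
    (hu : u ∈ zpowers w) (hu1 : u ≠ 1) (hun : u ≠ a n) :
    maxCyclicLabel u = maxCyclicLabel w := by
  rw [← mem_powers_iff_mem_zpowers] at hu
  obtain ⟨k, rfl⟩ := hu
  beta_reduce at hu1 hun ⊢
  cases w with
  | a i => rw [a_pow]; rfl
  | xa i =>
    rw [← pow_mod_orderOf, orderOf_xa] at hu1 hun ⊢
    obtain h | h | h | h : k % 4 = 0 ∨ k % 4 = 1 ∨ k % 4 = 2 ∨ k % 4 = 3 := by omega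
    all_goals rw [h] at hu1 hun ⊢
    · exact absurd (pow_zero _) hu1
    · rw [pow_one]
    · exact absurd (xa_sq i) hun
    · simp [xa_pow_three, maxCyclicLabel]

theorem exists_zpowers_of_maxCyclicLabel_eq [NeZero n] {u v : QuaternionGroup n}
    (h : maxCyclicLabel u = maxCyclicLabel v) : ∃ w, u ∈ zpowers w ∧ v ∈ zpowers w := by
  cases u with
  | a i =>
    cases v with
    | a j => exact ⟨a 1, a_mem_zpowers_a_one i, a_mem_zpowers_a_one j⟩
    | xa j => cases h
  | xa i =>
    cases v with
    | a j => cases h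
    | xa j =>
      have hji : ZMod.castHom (dvd_mul_left n 2) (ZMod n) (j - i) = 0 := by
        simp only [maxCyclicLabel, Option.some.injEq] at h
        rw [map_sub, h, sub_self]
      refine ⟨xa i, mem_zpowers _, ?_⟩
      rcases (ZMod.castHom_two_mul_eq_zero_iff _).1 hji with hj | hj
      · rw [sub_eq_zero.1 hj]
        exact mem_zpowers _
      · rw [sub_eq_iff_eq_add'.1 hj, ← xa_pow_three]
        exact pow_mem (mem_zpowers _) 3

theorem card_connectedComponent_induce_compl [NeZero n] (hn : n ≠ 1) :
    Nat.card ((enhancedPowerGraph (QuaternionGroup n)).induce {1, a n}ᶜ).ConnectedComponent =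
      n + 1 := by
  have : Nontrivial (ZMod n) := ZMod.nontrivial_iff.2 hn
  have hmem : ∀ g : QuaternionGroup n, g ∈ ({1, a n}ᶜ : Set _) ↔ g ≠ 1 ∧ g ≠ a n := by
    simp [not_or]
  refine (SimpleGraph.card_connectedComponent_eq (fun g => maxCyclicLabel g.1) ?_ ?_ ?_).trans
    (by rw [Finite.card_option, Nat.card_zmod])
  · rintro (_ | j)
    · refine ⟨⟨a 1, (hmem _).2 ⟨?_, ?_⟩⟩, rfl⟩ <;> simp only [← a_zero, ne_eq, a.injEq] <;>
        intro h
      all_goals simpa using congrArg (ZMod.castHom (dvd_mul_left n 2) (ZMod n)) h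
    · obtain ⟨i, rfl⟩ := ZMod.castHom_surjective (dvd_mul_left n 2) j
      exact ⟨⟨xa i, (hmem _).2 ⟨by rw [← a_zero]; nofun, nofun⟩⟩, rfl⟩
  · rintro u v ⟨-, w, hu, hv⟩
    obtain ⟨hu1, hun⟩ := (hmem _).1 u.2
    obtain ⟨hv1, hvn⟩ := (hmem _).1 v.2
    exact (maxCyclicLabel_eq_of_mem_zpowers hu hu1 hun).trans
      (maxCyclicLabel_eq_of_mem_zpowers hv hv1 hvn).symm
  · intro u v h
    obtain ⟨w, hu, hv⟩ := exists_zpowers_of_maxCyclicLabel_eq h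
    exact enhancedPowerGraph_induce_reachable hu hv

end QuaternionGroup

theorem stmt_16 (n : ℕ) (hn : 3 ≤ n) :
    vertexConnectivity (enhancedPowerGraph (QuaternionGroup (2 ^ (n - 2)))) = 2 ∧
      Nat.card ((enhancedPowerGraph (QuaternionGroup (2 ^ (n - 2)))).induce
        {g : QuaternionGroup (2 ^ (n - 2)) | g ≠ 1 ∧ orderOf g ≠ 2}).ConnectedComponent =
        2 ^ (n - 2) + 1 := by
  have hcard := QuaternionGroup.card_connectedComponent_induce_compl
    (Nat.one_lt_two_pow (by omega : n - 2 ≠ 0)).ne'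
  refine ⟨SimpleGraph.vertexConnectivity_eq_two QuaternionGroup.a_n_ne_one.symm
    isDominating_enhancedPowerGraph_one (QuaternionGroup.isDominating_a_two_pow _)
    fun hconn => ?_, ?_⟩
  · have := Finite.card_le_one_iff_subsingleton.2
      hconn.preconnected.subsingleton_connectedComponent
    have := Nat.two_pow_pos (n - 2)
    omega
  · rwa [QuaternionGroup.setOf_ne_one_and_orderOf_ne_two]
end
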